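/- arXiv:1303.5101 — 3 statements merged into one kernel-verified Lean document; each statement's English description precedes it below -/
import Mathlib

section
/- The polynomial x³ − (3105/2588)x² + (5751/16175)x − 4679/258800 is orthogonal to 1, x, and x² with respect to the inner product ⟨f,g⟩ = ∫₀¹ f(x)g(x)(−log x) dx. -/
/-!
The weight `-log x` has moments `∫₀¹ xⁿ (-log x) dx = 1/(n+1)²`, read off from the primitive
`xⁿ⁺¹/(n+1)² - xⁿ⁺¹ log x/(n+1)`, which extends continuously to `0`. The three inner products are
therefore explicit rational combinations of the numbers `1/k²`, and each one vanishes.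
-/

open Real intervalIntegral

namespace LogWeight

noncomputable def momentPrimitive (n : ℕ) (x : ℝ) : ℝ :=
  x ^ (n + 1) / ((n : ℝ) + 1) ^ 2 - x ^ n * (x * log x) / ((n : ℝ) + 1)

theorem continuous_momentPrimitive (n : ℕ) : Continuous (momentPrimitive n) :=
  ((continuous_pow (n + 1)).div_const _).sub
    (((continuous_pow n).mul continuous_mul_log).div_const _)

theorem hasDerivAt_momentPrimitive (n : ℕ) {x : ℝ} (hx : x ≠ 0) :
    HasDerivAt (momentPrimitive n) (x ^ n * -log x) x := by
  have hpow : HasDerivAt (fun y : ℝ => y ^ (n + 1)) (((n : ℝ) + 1) * x ^ n) x := by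
    simpa using hasDerivAt_pow (n + 1) x
  have hmul : HasDerivAt (fun y : ℝ => y ^ n * (y * log y))
      (((n : ℝ) + 1) * x ^ n * log x + x ^ (n + 1) * x⁻¹) x := by
    have hfun : (fun y : ℝ => y ^ n * (y * log y)) = fun y => y ^ (n + 1) * log y := by
      ext y
      ring
    exact hfun ▸ hpow.mul (hasDerivAt_log hx)
  refine HasDerivAt.congr_deriv (f := momentPrimitive n)
    ((hpow.div_const (((n : ℝ) + 1) ^ 2)).sub (hmul.div_const ((n : ℝ) + 1))) ?_
  field_simp
  ring

theorem intervalIntegrable_pow_mul_neg_log (n : ℕ) :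
    IntervalIntegrable (fun x : ℝ => x ^ n * -log x) MeasureTheory.volume 0 1 := by
  refine intervalIntegrable_deriv_of_nonneg (continuous_momentPrimitive n).continuousOn
    (fun x hx => hasDerivAt_momentPrimitive n (ne_of_gt (by simpa using hx.1))) fun x hx => ?_
  rw [min_eq_left zero_le_one, max_eq_right zero_le_one] at hx
  exact mul_nonneg (pow_nonneg hx.1.le n) (neg_nonneg.mpr (log_nonpos hx.1.le hx.2.le))

theorem integral_pow_mul_neg_log (n : ℕ) :
    ∫ x in (0 : ℝ)..1, x ^ n * -log x = 1 / ((n : ℝ) + 1) ^ 2 := by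
  rw [integral_eq_sub_of_hasDerivAt_of_le zero_le_one
    (continuous_momentPrimitive n).continuousOn
    (fun x hx => hasDerivAt_momentPrimitive n (ne_of_gt hx.1))
    (intervalIntegrable_pow_mul_neg_log n)]
  simp [momentPrimitive]

theorem integral_pow_mul_cubic_mul_neg_log (m : ℕ) (a b c : ℝ) :
    ∫ x in (0 : ℝ)..1, x ^ m * (x ^ 3 - a * x ^ 2 + b * x - c) * -log x =
      1 / ((m : ℝ) + 4) ^ 2 - a / ((m : ℝ) + 3) ^ 2 + b / ((m : ℝ) + 2) ^ 2
        - c / ((m : ℝ) + 1) ^ 2 := by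
  have hexpand : ∀ x : ℝ, x ^ m * (x ^ 3 - a * x ^ 2 + b * x - c) * -log x =
      x ^ (m + 3) * -log x - a * (x ^ (m + 2) * -log x) + b * (x ^ (m + 1) * -log x)
        - c * (x ^ m * -log x) := fun x => by ring
  have i3 := intervalIntegrable_pow_mul_neg_log (m + 3)
  have i2 := (intervalIntegrable_pow_mul_neg_log (m + 2)).const_mul a
  have i1 := (intervalIntegrable_pow_mul_neg_log (m + 1)).const_mul b
  have i0 := (intervalIntegrable_pow_mul_neg_log m).const_mul c
  simp_rw [hexpand]
  rw [integral_sub ((i3.sub i2).add i1) i0, integral_add (i3.sub i2) i1, integral_sub i3 i2,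
    integral_const_mul, integral_const_mul, integral_const_mul, integral_pow_mul_neg_log,
    integral_pow_mul_neg_log, integral_pow_mul_neg_log, integral_pow_mul_neg_log]
  push_cast
  ring

end LogWeight

open LogWeight in
theorem p3_orthogonal :
    (∫ x in (0:ℝ)..1,
      (x ^ 3 - (3105/2588) * x ^ 2 + (5751/16175) * x - 4679/258800) * (-Real.log x) = 0) ∧
    (∫ x in (0:ℝ)..1,
      x * (x ^ 3 - (3105/2588) * x ^ 2 + (5751/16175) * x - 4679/258800) * (-Real.log x) = 0) ∧
    (∫ x in (0:ℝ)..1,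
      x ^ 2 * (x ^ 3 - (3105/2588) * x ^ 2 + (5751/16175) * x - 4679/258800) * (-Real.log x) = 0) := by
  refine ⟨?_, ?_, ?_⟩
  · have h := integral_pow_mul_cubic_mul_neg_log 0 (3105/2588) (5751/16175) (4679/258800)
    simp only [pow_zero, one_mul] at h
    rw [h]
    norm_num
  · have h := integral_pow_mul_cubic_mul_neg_log 1 (3105/2588) (5751/16175) (4679/258800)
    simp only [pow_one] at h
    rw [h]
    norm_num
  · rw [integral_pow_mul_cubic_mul_neg_log]
    norm_num
end

section
/- The polynomial p₂(x) = x² − (19/37)x + 217/7992 is orthogonal to 1 and x with respect to the inner product ⟨f,g⟩ = ∫₀¹ f(x)g(x)(log x)² dx. -/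
/-!
The substitution `x = exp (-t)` turns the moments `∫₀¹ xˢ (log x)ᵏ dx` into Gamma integrals,
so `∫₀¹ xⁿ (log x)² dx = 2 / (n + 1)³`, and both orthogonality relations reduce to rational
identities between these moments.
-/

open Real Set MeasureTheory
open scoped Nat

lemma integral_pow_mul_exp_neg_mul_Ioi (k : ℕ) {r : ℝ} (hr : 0 < r) :
    ∫ t in Ioi (0 : ℝ), t ^ k * exp (-(r * t)) = k ! / r ^ (k + 1) := by
  have h := integral_rpow_mul_exp_neg_mul_Ioi (a := k + 1) (by positivity) hr
  rw [add_sub_cancel_right, Gamma_nat_eq_factorial, div_rpow zero_le_one hr.le, one_rpow,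
    ← Nat.cast_add_one, rpow_natCast] at h
  simpa only [rpow_natCast, one_div_mul_eq_div] using h

lemma image_exp_neg_Ioi_zero : (fun t : ℝ ↦ exp (-t)) '' Ioi 0 = Ioo 0 1 := by
  rw [← exp_zero, ← image_exp_Iio, ← neg_zero, ← image_neg_Ioi, image_image, neg_zero]

lemma integral_rpow_mul_log_pow {s : ℝ} (hs : -1 < s) (k : ℕ) :
    ∫ x in (0 : ℝ)..1, x ^ s * log x ^ k = (-1) ^ k * k ! / (s + 1) ^ (k + 1) := by
  rw [intervalIntegral.integral_of_le zero_le_one, integral_Ioc_eq_integral_Ioo,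
    ← image_exp_neg_Ioi_zero,
    integral_image_eq_integral_abs_deriv_smul measurableSet_Ioi
      (fun t _ ↦ ((hasDerivAt_neg t).exp).hasDerivWithinAt)
      (fun t _ u _ h ↦ neg_injective (exp_injective h)),
    mul_div_assoc, ← integral_pow_mul_exp_neg_mul_Ioi k (by linarith : 0 < s + 1),
    ← integral_const_mul]
  refine setIntegral_congr_fun measurableSet_Ioi fun t _ ↦ ?_
  rw [smul_eq_mul, log_exp, ← exp_mul, mul_neg_one, abs_neg, abs_of_pos (exp_pos _), neg_pow t,
    show -((s + 1) * t) = -t + -t * s by ring, exp_add]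
  ring

lemma integral_pow_mul_log_sq (n : ℕ) :
    ∫ x in (0 : ℝ)..1, x ^ n * log x ^ 2 = 2 / (n + 1) ^ 3 := by
  simpa using integral_rpow_mul_log_pow (s := n) (by linarith [n.cast_nonneg (α := ℝ)]) 2

lemma intervalIntegrable_pow_mul_log_sq (n : ℕ) :
    IntervalIntegrable (fun x ↦ x ^ n * log x ^ 2) volume 0 1 :=
  -- a non-integrable function has integral `0`
  intervalIntegral.intervalIntegrable_of_integral_ne_zero <| by
    rw [integral_pow_mul_log_sq]; positivity

lemma integral_pow_mul_quadratic_mul_log_sq (m : ℕ) (a b : ℝ) :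
    ∫ x in (0 : ℝ)..1, x ^ m * (x ^ 2 + a * x + b) * log x ^ 2
      = 2 / (m + 3) ^ 3 + a * (2 / (m + 2) ^ 3) + b * (2 / (m + 1) ^ 3) := by
  have hsplit : (fun x : ℝ ↦ x ^ m * (x ^ 2 + a * x + b) * log x ^ 2) = fun x ↦
      x ^ (m + 2) * log x ^ 2 + a * (x ^ (m + 1) * log x ^ 2) + b * (x ^ m * log x ^ 2) := by
    ext x; ring
  have hI := intervalIntegrable_pow_mul_log_sq
  rw [hsplit,
    intervalIntegral.integral_add ((hI _).add ((hI _).const_mul a)) ((hI _).const_mul b),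
    intervalIntegral.integral_add (hI _) ((hI _).const_mul a),
    intervalIntegral.integral_const_mul, intervalIntegral.integral_const_mul,
    integral_pow_mul_log_sq, integral_pow_mul_log_sq, integral_pow_mul_log_sq]
  push_cast
  ring

theorem p2_orthogonal_m2 :
    (∫ x in (0:ℝ)..1, (x ^ 2 - (19/37) * x + 217/7992) * (Real.log x) ^ 2 = 0) ∧
    (∫ x in (0:ℝ)..1, x * (x ^ 2 - (19/37) * x + 217/7992) * (Real.log x) ^ 2 = 0) := by
  constructor
  · convert integral_pow_mul_quadratic_mul_log_sq 0 (-19/37) (217/7992) using 1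
    · congr 1; ext x; ring
    · norm_num
  · convert integral_pow_mul_quadratic_mul_log_sq 1 (-19/37) (217/7992) using 1
    · congr 1; ext x; ring
    · norm_num
end

section
/- The polynomial p₄(x) = x⁴ − 2((π⁴ − 78π² + 672)/(π²(π² − 10)))x² + (π⁶ − 114π⁴ + 1728π² − 6912)/(π⁴(π² − 10)) satisfies ∫_{−1}^{1} p₄(x)cos(πx/2) dx = 0 and ∫_{−1}^{1} x² p₄(x)cos(πx/2) dx = 0. -/
/-!
Write `M n = ∫_{-1}^{1} xⁿ cos(πx/2) dx`. Integrating by parts twice, and using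
`cos(±π/2) = 0`, `sin(±π/2) = ±1`, gives for even `n` the recursion
`M (n+2) = 4/π - 4(n+2)(n+1)/π² · M n` with `M 0 = 4/π`. Both integrals are linear
combinations of `M 0, …, M 6`, hence explicit rational functions of `π`, and they vanish
identically once `π² ≠ 10`.
-/

open Real

theorem hasDerivAt_pow_mul_sin_add_pow_mul_cos {a : ℝ} (ha : a ≠ 0) (n : ℕ) (x : ℝ) :
    HasDerivAt
      (fun y => y ^ (n + 2) * sin (a * y) / a + (n + 2) * y ^ (n + 1) * cos (a * y) / a ^ 2)
      (x ^ (n + 2) * cos (a * x) + (n + 2) * (n + 1) / a ^ 2 * (x ^ n * cos (a * x))) x := by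
  have hax : HasDerivAt (fun y => a * y) a x := by simpa using (hasDerivAt_id x).const_mul a
  have h := ((((hasDerivAt_pow (n + 2) x).mul ((hasDerivAt_sin _).comp x hax)).div_const a).add
    ((((hasDerivAt_pow (n + 1) x).const_mul ((n : ℝ) + 2)).mul
      ((hasDerivAt_cos _).comp x hax)).div_const (a ^ 2)))
  refine h.congr_deriv ?_
  simp only [Function.comp_apply, Nat.add_sub_cancel]
  push_cast
  field_simp
  ring

theorem integral_pow_add_two_mul_cos {a : ℝ} (ha : a ≠ 0) (n : ℕ) (u v : ℝ) :
    ∫ x in u..v, x ^ (n + 2) * cos (a * x) =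
      (v ^ (n + 2) * sin (a * v) / a + (n + 2) * v ^ (n + 1) * cos (a * v) / a ^ 2)
      - (u ^ (n + 2) * sin (a * u) / a + (n + 2) * u ^ (n + 1) * cos (a * u) / a ^ 2)
      - (n + 2) * (n + 1) / a ^ 2 * ∫ x in u..v, x ^ n * cos (a * x) := by
  have hint : ∀ k : ℕ,
      IntervalIntegrable (fun x => x ^ k * cos (a * x)) MeasureTheory.volume u v :=
    fun k => (by fun_prop : Continuous _).intervalIntegrable u v
  rw [← intervalIntegral.integral_const_mul, eq_sub_iff_add_eq,
    ← intervalIntegral.integral_add (hint _) ((hint n).const_mul _),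
    intervalIntegral.integral_eq_sub_of_hasDerivAt
      (fun x _ => hasDerivAt_pow_mul_sin_add_pow_mul_cos ha n x)
      ((hint _).add ((hint n).const_mul _))]

noncomputable def cosMoment (n : ℕ) : ℝ := ∫ x in (-1:ℝ)..1, x ^ n * cos (π * x / 2)

theorem cosMoment_zero : cosMoment 0 = 4 / π := by
  simp only [cosMoment, pow_zero, one_mul, mul_div_right_comm π]
  rw [intervalIntegral.integral_comp_mul_left cos (by positivity), integral_cos]
  simp only [mul_one, mul_neg, sin_neg, sin_pi_div_two, inv_div, smul_eq_mul]
  ring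

theorem cosMoment_add_two {n : ℕ} (hn : Even n) :
    cosMoment (n + 2) = 4 / π - 4 * (n + 2) * (n + 1) / π ^ 2 * cosMoment n := by
  have hπ : π / 2 ≠ 0 := by positivity
  simp only [cosMoment, mul_div_right_comm π]
  rw [integral_pow_add_two_mul_cos hπ]
  simp only [mul_one, mul_neg_one, sin_neg, cos_neg, sin_pi_div_two, cos_pi_div_two,
    (hn.add even_two).neg_one_pow, (hn.add_one).neg_one_pow]
  field_simp
  ring

theorem integral_pow_mul_biquadratic_mul_cos (k : ℕ) (b d : ℝ) :
    ∫ x in (-1:ℝ)..1, x ^ k * (x ^ 4 - b * x ^ 2 + d) * cos (π * x / 2)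
      = cosMoment (k + 4) - b * cosMoment (k + 2) + d * cosMoment k := by
  have hint : ∀ m : ℕ,
      IntervalIntegrable (fun x => x ^ m * cos (π * x / 2)) MeasureTheory.volume (-1) 1 :=
    fun m => (by fun_prop : Continuous _).intervalIntegrable _ _
  simp only [cosMoment]
  rw [← intervalIntegral.integral_const_mul, ← intervalIntegral.integral_const_mul,
    ← intervalIntegral.integral_sub (hint _) ((hint _).const_mul _),
    ← intervalIntegral.integral_add ((hint _).sub ((hint _).const_mul _)) ((hint _).const_mul _)]
  congr 1
  ext x
  ring

theorem pi_sq_lt_ten : π ^ 2 < 10 := by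
  nlinarith [pi_lt_d2, pi_pos]

theorem cos_p4 :
    (∫ x in (-1:ℝ)..1,
      (x ^ 4 - 2 * ((π^4 - 78*π^2 + 672) / (π^2 * (π^2 - 10))) * x ^ 2
        + (π^6 - 114*π^4 + 1728*π^2 - 6912) / (π^4 * (π^2 - 10))) * Real.cos (π * x / 2) = 0) ∧
    (∫ x in (-1:ℝ)..1,
      x ^ 2 * (x ^ 4 - 2 * ((π^4 - 78*π^2 + 672) / (π^2 * (π^2 - 10))) * x ^ 2
        + (π^6 - 114*π^4 + 1728*π^2 - 6912) / (π^4 * (π^2 - 10))) * Real.cos (π * x / 2) = 0) := by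
  have h10 : π ^ 2 - 10 ≠ 0 := by linarith [pi_sq_lt_ten]
  have hπ := pi_ne_zero
  have h2 := cosMoment_add_two (n := 0) (by decide)
  have h4 := cosMoment_add_two (n := 2) (by decide)
  have h6 := cosMoment_add_two (n := 4) (by decide)
  have h0 := integral_pow_mul_biquadratic_mul_cos 0
  simp only [pow_zero, one_mul] at h0
  rw [h0, integral_pow_mul_biquadratic_mul_cos 2, h6, h4, h2, cosMoment_zero]
  push_cast
  constructor <;> field_simp <;> ring
end
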